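/- In the two-player example game with a bi-dimensional action space for player 1, each player i's interim payoff V_i(a_i, t_i; s_j) has increasing differences in (a_i, t_i) and is quasi-supermodular in a_i whenever the opponent j adopts a monotone strategy s_j. -/

import Mathlib

/-!
Statement 16 (Claim 2, part 1): in the two-player example game with a bi-dimensional action
space for player 1, each player's interim payoff has increasing differences in (own action,
own type) and is quasi-supermodular in own actions whenever the opponent adopts a monotone
strategy.
-/

open MeasureTheory Filter Metric

namespace MonotonePerfection

noncomputable section

/-- Increasing differences. -/
def IncreasingDifferences {X Y : Type*} [Preorder X] [Preorder Y] (h : X → Y → ℝ) : Prop :=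
  ∀ ⦃x x' : X⦄ ⦃y y' : Y⦄, x < x' → y < y' → h x' y - h x y ≤ h x' y' - h x y'

/-- Quasi-supermodularity of a real-valued function on a lattice. -/
def QuasiSupermodular {X : Type*} [Lattice X] (h : X → ℝ) : Prop :=
  ∀ x x' : X, (h (x ⊓ x') ≤ h x' → h x ≤ h (x ⊔ x')) ∧
    (h (x ⊓ x') < h x' → h x < h (x ⊔ x'))

/-- One binary coordinate {0,1} of player 1's action space. -/
abbrev B2 : Type := {a : ℕ // a ≤ 1}

/-- Player 1's bi-dimensional action space {0,1} × {0,1} with the coordinatewise order. -/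
abbrev A1sp : Type := B2 × B2

/-- Player 2's binary action space {1,2}. -/
abbrev Act12 : Type := {a : ℕ // a = 1 ∨ a = 2}

/-- The type space [0,1]. -/
abbrev T01 : Type := ↥(Set.Icc (0:ℝ) 1)

/-- Lebesgue (= uniform) measure on [0,1]. -/
noncomputable def μ01 : Measure T01 := (volume : Measure ℝ).comap Subtype.val

/-- Player 1's payoff in the bi-dimensional example game. -/
noncomputable def w1 (a1 : A1sp) (a2 : Act12) (t1 t2 : ℝ) : ℝ :=
  if a1.1.1 = 0 then
    (if a1.2.1 = 0 then (if a2.1 = 1 then 2 else -t2/2)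
     else (if a2.1 = 1 then 41/24 + t2/6 else 2 - t2))
  else
    (if a1.2.1 = 0 then (if t1 ≤ 1/2 then -7 else 7)
     else (if a2.1 = 1 then (if t1 ≤ 1/2 then -29/4 else 27/4)
           else (if t1 ≤ 1/2 then -21/4 else 35/4)))

/-- Player 2's payoff in the bi-dimensional example game, depending only on the actions. -/
noncomputable def w2 (a1 : A1sp) (a2 : Act12) : ℝ :=
  if a1.1.1 = 1 ∧ a1.2.1 = 1 then (if a2.1 = 1 then 7 else -1)
  else (if a2.1 = 1 then -1 else 1)

/-- Player 1's interim payoff against a pure strategy of player 2 (types are independent and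
uniform on [0,1]). -/
noncomputable def W1p (a : A1sp) (t1 : T01) (s2 : T01 → Act12) : ℝ :=
  ∫ t2 : T01, w1 a (s2 t2) (t1 : ℝ) (t2 : ℝ) ∂μ01

/-- Player 2's interim payoff against a pure strategy of player 1. -/
noncomputable def W2p (a : Act12) (t2 : T01) (s1 : T01 → A1sp) : ℝ :=
  ∫ t1 : T01, w2 (s1 t1) a ∂μ01


/-! ### Auxiliary lemmas -/

lemma qsm_linear {X : Type*} [LinearOrder X] (h : X → ℝ) : QuasiSupermodular h := by
  intro x x'
  rcases le_total x x' with hle | hle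
  · rw [inf_eq_left.2 hle, sup_eq_right.2 hle]
    exact ⟨fun h' => h', fun h' => h'⟩
  · rw [inf_eq_right.2 hle, sup_eq_left.2 hle]
    exact ⟨fun _ => le_rfl, fun h' => absurd h' (lt_irrefl _)⟩

lemma measure_val_eq (q : ℝ) : μ01 {t : T01 | (t:ℝ) = q} = 0 := by
  have hset : {t : T01 | (t:ℝ) = q} = Subtype.val ⁻¹' {q} := rfl
  rw [μ01, hset, Measure.comap_apply _ Subtype.val_injective
      (fun s hs => MeasurableSet.subtype_image measurableSet_Icc hs) _
      (measurable_subtype_coe (measurableSet_singleton q))]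
  exact measure_mono_null (Set.image_preimage_subset _ _) Real.volume_singleton

lemma exists_threshold (s2 : T01 → Act12) (hm : Monotone s2) :
    ∃ q : ℝ, 0 ≤ q ∧ q ≤ 1 ∧ ∀ t : T01,
      ((t:ℝ) < q → (s2 t).1 = 1) ∧ (q < (t:ℝ) → (s2 t).1 = 2) := by
  set S : Set ℝ := insert 1 (Subtype.val '' {t : T01 | (s2 t).1 = 2}) with hS
  have hne : S.Nonempty := ⟨1, Set.mem_insert _ _⟩
  have hbdd : ∀ x ∈ S, (0:ℝ) ≤ x := by
    rintro x (rfl | ⟨t, _, rfl⟩)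
    · norm_num
    · exact t.2.1
  have hbb : BddBelow S := ⟨0, fun x hx => hbdd x hx⟩
  refine ⟨sInf S, le_csInf hne hbdd, csInf_le hbb (Set.mem_insert _ _), fun t => ⟨?_, ?_⟩⟩
  · intro hlt
    rcases (s2 t).2 with h1 | h2
    · exact h1
    · exact absurd (csInf_le hbb (Set.mem_insert_of_mem _ ⟨t, h2, rfl⟩)) (not_le.2 hlt)
  · intro hlt
    obtain ⟨u, hu, hu'⟩ := exists_lt_of_csInf_lt hne hlt
    rcases hu with rfl | ⟨t', h2, rfl⟩
    · exact absurd (hu'.trans_le t.2.2) (lt_irrefl _)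
    · have hle : s2 t' ≤ s2 t := hm (Subtype.coe_le_coe.1 hu'.le)
      have h2' : (s2 t').1 ≤ (s2 t).1 := hle
      simp only [Set.mem_setOf_eq] at h2
      rcases (s2 t).2 with h1 | h1 <;> omega

lemma interval_affine (a b c d : ℝ) : ∫ x in a..b, (c + d * x) = c*(b-a) + d*(b^2-a^2)/2 := by
  have h1 : IntervalIntegrable (fun _ : ℝ => c) volume a b := intervalIntegrable_const
  have h2 : IntervalIntegrable (fun x : ℝ => d * x) volume a b :=
    Continuous.intervalIntegrable (by continuity) _ _
  rw [intervalIntegral.integral_add h1 h2, intervalIntegral.integral_const,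
    intervalIntegral.integral_const_mul, integral_id]
  simp [smul_eq_mul]; ring

lemma integral_threshold (s2 : T01 → Act12)
    (q : ℝ) (hq0 : 0 ≤ q) (hq1 : q ≤ 1)
    (hth : ∀ t : T01, ((t:ℝ) < q → (s2 t).1 = 1) ∧ (q < (t:ℝ) → (s2 t).1 = 2))
    (c1 d1 c2 d2 : ℝ) :
    ∫ t : T01, (if (s2 t).1 = 1 then c1 + d1 * (t:ℝ) else c2 + d2 * (t:ℝ)) ∂μ01
      = (c1 * q + d1 * q^2/2) + (c2 * (1-q) + d2 * (1-q^2)/2) := by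
  have hae : (fun t : T01 => if (s2 t).1 = 1 then c1 + d1 * (t:ℝ) else c2 + d2 * (t:ℝ))
      =ᵐ[μ01] fun t : T01 => if (t:ℝ) ≤ q then c1 + d1 * (t:ℝ) else c2 + d2 * (t:ℝ) := by
    rw [Filter.EventuallyEq, ae_iff]
    refine measure_mono_null ?_ (measure_val_eq q)
    intro t ht
    simp only [Set.mem_setOf_eq] at ht ⊢
    by_contra hne
    rcases lt_trichotomy (t:ℝ) q with h | h | h
    · rw [(hth t).1 h, if_pos rfl, if_pos h.le] at ht; exact ht rfl
    · exact hne h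
    · rw [(hth t).2 h, if_neg (by norm_num), if_neg (not_le.2 h)] at ht; exact ht rfl
  rw [integral_congr_ae hae]
  have h2 : ∫ t : T01, (if (t:ℝ) ≤ q then c1 + d1 * (t:ℝ) else c2 + d2 * (t:ℝ)) ∂μ01
      = ∫ x in Set.Icc (0:ℝ) 1, (if x ≤ q then c1 + d1 * x else c2 + d2 * x) :=
    integral_subtype_comap measurableSet_Icc fun x => if x ≤ q then c1 + d1 * x else c2 + d2 * x
  have hcont1 : Continuous fun x : ℝ => c1 + d1 * x := by continuity
  have hcont2 : Continuous fun x : ℝ => c2 + d2 * x := by continuity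
  have e1 : ∫ x in Set.Ioc (0:ℝ) q, (if x ≤ q then c1 + d1 * x else c2 + d2 * x)
      = ∫ x in Set.Ioc (0:ℝ) q, (c1 + d1 * x) := by
    apply setIntegral_congr_fun measurableSet_Ioc
    intro x hx; exact if_pos hx.2
  have e2 : ∫ x in Set.Ioc q 1, (if x ≤ q then c1 + d1 * x else c2 + d2 * x)
      = ∫ x in Set.Ioc q 1, (c2 + d2 * x) := by
    apply setIntegral_congr_fun measurableSet_Ioc
    intro x hx; exact if_neg (not_le.2 hx.1)
  have i1 : IntegrableOn (fun x => if x ≤ q then c1 + d1 * x else c2 + d2 * x)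
      (Set.Ioc (0:ℝ) q) volume :=
    (hcont1.integrableOn_Ioc).congr_fun (fun x hx => (if_pos hx.2).symm) measurableSet_Ioc
  have i2 : IntegrableOn (fun x => if x ≤ q then c1 + d1 * x else c2 + d2 * x)
      (Set.Ioc q (1:ℝ)) volume :=
    (hcont2.integrableOn_Ioc).congr_fun (fun x hx => (if_neg (not_le.2 hx.1)).symm)
      measurableSet_Ioc
  rw [h2, integral_Icc_eq_integral_Ioc, ← Set.Ioc_union_Ioc_eq_Ioc hq0 hq1,
    setIntegral_union (Set.Ioc_disjoint_Ioc_of_le le_rfl) measurableSet_Ioc i1 i2, e1, e2,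
    ← intervalIntegral.integral_of_le hq0, ← intervalIntegral.integral_of_le hq1,
    interval_affine, interval_affine]
  ring

/-- The jump constant of player 1's type-dependent payoffs. -/
def cval (t1 : T01) : ℝ := if (t1:ℝ) ≤ 1/2 then -7 else 7

/-- The interim payoff of player 1 as an explicit function of coordinates. -/
def val (q c : ℝ) (i j : ℕ) : ℝ :=
  if i = 0 then (if j = 0 then 2*q - 1/4 + q^2/4 else 3/2 - 7*q/24 + 7*q^2/12)
  else (if j = 0 then c else c + 7/4 - 2*q)

lemma W1p_val (s2 : T01 → Act12)
    (q : ℝ) (hq0 : 0 ≤ q) (hq1 : q ≤ 1)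
    (hth : ∀ t : T01, ((t:ℝ) < q → (s2 t).1 = 1) ∧ (q < (t:ℝ) → (s2 t).1 = 2))
    (a : A1sp) (t1 : T01) :
    W1p a t1 s2 = val q (cval t1) a.1.1 a.2.1 := by
  obtain ⟨⟨i, hi⟩, ⟨j, hj⟩⟩ := a
  interval_cases i <;> interval_cases j <;> simp only [W1p, val, cval]
  · have he : (fun t2 : T01 => w1 ⟨⟨0, by omega⟩, ⟨0, by omega⟩⟩ (s2 t2) (↑t1) (↑t2))
        = fun t2 : T01 => if (s2 t2).1 = 1 then 2 + 0 * (t2:ℝ) else 0 + (-1/2) * (t2:ℝ) := by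
      funext t2; rcases (s2 t2).2 with h | h <;> simp [w1, h] <;> ring
    rw [he, integral_threshold s2 q hq0 hq1 hth]
    norm_num; ring
  · have he : (fun t2 : T01 => w1 ⟨⟨0, by omega⟩, ⟨1, by omega⟩⟩ (s2 t2) (↑t1) (↑t2))
        = fun t2 : T01 => if (s2 t2).1 = 1 then 41/24 + (1/6) * (t2:ℝ) else 2 + (-1) * (t2:ℝ) := by
      funext t2; rcases (s2 t2).2 with h | h <;> simp [w1, h] <;> ring
    rw [he, integral_threshold s2 q hq0 hq1 hth]
    norm_num; ring
  · -- a = (1,0)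
    have he : (fun t2 : T01 => w1 ⟨⟨1, by omega⟩, ⟨0, by omega⟩⟩ (s2 t2) (↑t1) (↑t2))
        = fun t2 : T01 => if (s2 t2).1 = 1 then cval t1 + 0 * (t2:ℝ) else cval t1 + 0 * (t2:ℝ) := by
      funext t2
      show (if (t1:ℝ) ≤ 1/2 then (-7:ℝ) else 7) = _
      rcases (s2 t2).2 with h | h <;> rw [h] <;> rw [cval] <;> norm_num
    rw [he, integral_threshold s2 q hq0 hq1 hth]
    norm_num
    rw [cval]; ring
  · -- a = (1,1)
    have he : (fun t2 : T01 => w1 ⟨⟨1, by omega⟩, ⟨1, by omega⟩⟩ (s2 t2) (↑t1) (↑t2))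
        = fun t2 : T01 => if (s2 t2).1 = 1
            then (if (t1:ℝ) ≤ 1/2 then (-29/4:ℝ) else 27/4) + 0 * (t2:ℝ)
            else (if (t1:ℝ) ≤ 1/2 then (-21/4:ℝ) else 35/4) + 0 * (t2:ℝ) := by
      funext t2
      show (if (s2 t2).1 = 1 then (if (t1:ℝ) ≤ 1/2 then (-29/4:ℝ) else 27/4)
            else (if (t1:ℝ) ≤ 1/2 then (-21/4:ℝ) else 35/4)) = _
      rcases (s2 t2).2 with h | h <;> rw [h] <;> norm_num
    rw [he, integral_threshold s2 q hq0 hq1 hth]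
    rcases le_or_gt (t1:ℝ) (1/2) with ht | ht
    · simp only [if_pos ht]; norm_num; try ring
    · simp only [if_neg (not_le.2 ht)]; norm_num; try ring

lemma b2_coe_inf (a b : B2) : ((a ⊓ b : B2) : ℕ) = min (a:ℕ) (b:ℕ) := by
  rcases le_total a b with h | h
  · rw [inf_eq_left.2 h, min_eq_left (Subtype.coe_le_coe.2 h)]
  · rw [inf_eq_right.2 h, min_eq_right (Subtype.coe_le_coe.2 h)]

lemma b2_coe_sup (a b : B2) : ((a ⊔ b : B2) : ℕ) = max (a:ℕ) (b:ℕ) := by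
  rcases le_total a b with h | h
  · rw [sup_eq_right.2 h, max_eq_right (Subtype.coe_le_coe.2 h)]
  · rw [sup_eq_left.2 h, max_eq_left (Subtype.coe_le_coe.2 h)]

lemma A1_inf_fst (x y : A1sp) : ((x ⊓ y).1 : ℕ) = min x.1.1 y.1.1 := b2_coe_inf x.1 y.1
lemma A1_inf_snd (x y : A1sp) : ((x ⊓ y).2 : ℕ) = min x.2.1 y.2.1 := b2_coe_inf x.2 y.2
lemma A1_sup_fst (x y : A1sp) : ((x ⊔ y).1 : ℕ) = max x.1.1 y.1.1 := b2_coe_sup x.1 y.1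
lemma A1_sup_snd (x y : A1sp) : ((x ⊔ y).2 : ℕ) = max x.2.1 y.2.1 := b2_coe_sup x.2 y.2

lemma cval_mono {t1 t1' : T01} (h : t1 < t1') : cval t1 ≤ cval t1' := by
  have hlt : (t1:ℝ) < (t1':ℝ) := h
  rw [cval, cval]
  split_ifs with h1 h2 h2 <;> norm_num <;> linarith

lemma cval_cases (t1 : T01) : cval t1 = -7 ∨ cval t1 = 7 := by
  rw [cval]; split_ifs <;> simp

set_option maxHeartbeats 2000000 in
/-- **Claim.**  In the bi-dimensional example game, each player's interim payoff has
increasing differences in (own action, own type) and is quasi-supermodular in own actions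
against any monotone strategy of the opponent. -/
theorem example2_increasingDifferences_and_quasiSupermodular :
    (∀ s2 : T01 → Act12, Measurable s2 → Monotone s2 →
      IncreasingDifferences (fun (a : A1sp) (t1 : T01) => W1p a t1 s2) ∧
      ∀ t1 : T01, QuasiSupermodular fun a : A1sp => W1p a t1 s2) ∧
    (∀ s1 : T01 → A1sp, Measurable s1 → Monotone s1 →
      IncreasingDifferences (fun (a : Act12) (t2 : T01) => W2p a t2 s1) ∧
      ∀ t2 : T01, QuasiSupermodular fun a : Act12 => W2p a t2 s1) := by
  constructor
  · intro s2 hs2 hmono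
    obtain ⟨q, hq0, hq1, hth⟩ := exists_threshold s2 hmono
    constructor
    · intro x x' y y' hx hy
      simp only [W1p_val s2 q hq0 hq1 hth]
      have hc := cval_mono hy
      have h1 : x.1.1 ≤ x'.1.1 := Subtype.coe_le_coe.2 hx.le.1
      have h2 : x.2.1 ≤ x'.2.1 := Subtype.coe_le_coe.2 hx.le.2
      obtain ⟨⟨i, hi⟩, ⟨j, hj⟩⟩ := x
      obtain ⟨⟨i', hi'⟩, ⟨j', hj'⟩⟩ := x'
      simp only at h1 h2 ⊢
      interval_cases i <;> interval_cases i' <;> interval_cases j <;> interval_cases j' <;>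
        first
          | omega
          | (norm_num [val]; all_goals linarith [hc])
    · intro t1 x x'
      simp only [W1p_val s2 q hq0 hq1 hth, A1_inf_fst, A1_inf_snd, A1_sup_fst, A1_sup_snd]
      obtain ⟨⟨i, hi⟩, ⟨j, hj⟩⟩ := x
      obtain ⟨⟨i', hi'⟩, ⟨j', hj'⟩⟩ := x'
      simp only
      rcases cval_cases t1 with hc | hc <;> rw [hc] <;>
        interval_cases i <;> interval_cases i' <;> interval_cases j <;> interval_cases j' <;>
        norm_num [val] <;> constructor <;> intro hyp <;>
        nlinarith [hq0, hq1, sq_nonneg q, sq_nonneg (1-q), mul_nonneg hq0 (sub_nonneg.2 hq1)]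
  · intro s1 hs1 hmono
    refine ⟨?_, fun t2 => qsm_linear _⟩
    intro x x' y y' hx hy
    simp only [W2p]
    exact le_rfl

end

end MonotonePerfection
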